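/- arXiv:1801.07565 — 2 statements merged into one kernel-verified Lean document; each statement's English description precedes it below -/
import Mathlib

section
/- ₂F₁(1/2, 1/2; 1; 1/2) = Γ(1/4)^2 / (2π^{3/2}). -/
open scoped BigOperators

/-- Real Pochhammer symbol. -/
noncomputable def pochR (a : ℝ) (n : ℕ) : ℝ := ∏ i ∈ Finset.range n, (a + i)

/-- Real Gaussian hypergeometric function `₂F₁(a,b;c;x)`. -/
noncomputable def hypR (a b c : ℝ) (x : ℝ) : ℝ :=
  ∑' n : ℕ, pochR a n * pochR b n / pochR c n * x ^ n / (n.factorial : ℝ)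

/-!
Euler's integral turns the series into `π⁻¹ ∫₀¹ t^(-1/2) (1-t)^(-1/2) (1-t/2)^(-1/2) dt`: expand
`(1 - x t)^(-a)` by the binomial series and integrate termwise against the Beta kernel, the terms
being nonnegative. The substitution `t = 1 - √w` turns this integral into `B(1/4, 1/2) / √2`, and
the reflection formula `Γ(1/4) Γ(3/4) = √2 π` finishes.
-/

open Real MeasureTheory Set
open ProbabilityTheory (beta beta_pos beta_eq_betaIntegralReal)
open scoped Nat

lemma pochR_succ (a : ℝ) (n : ℕ) : pochR a (n + 1) = pochR a n * (a + n) :=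
  Finset.prod_range_succ _ _

lemma pochR_eq_ascPochhammer_eval (a : ℝ) (n : ℕ) : pochR a n = (ascPochhammer ℝ n).eval a := by
  induction n with
  | zero => simp [pochR]
  | succ n ih => rw [pochR_succ, ih, ascPochhammer_succ_eval]

lemma pochR_nonneg {a : ℝ} (ha : 0 ≤ a) (n : ℕ) : 0 ≤ pochR a n :=
  Finset.prod_nonneg fun _ _ => by positivity

lemma pochR_pos {a : ℝ} (ha : 0 < a) (n : ℕ) : 0 < pochR a n :=
  Finset.prod_pos fun _ _ => by positivity

lemma pochR_le_pochR {a b : ℝ} (ha : 0 ≤ a) (hab : a ≤ b) (n : ℕ) : pochR a n ≤ pochR b n :=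
  Finset.prod_le_prod (fun _ _ => by positivity) fun _ _ => by linarith

lemma Gamma_add_nat {a : ℝ} (ha : 0 < a) (n : ℕ) : Gamma (a + n) = pochR a n * Gamma a := by
  induction n with
  | zero => simp [pochR]
  | succ n ih =>
    rw [Nat.cast_succ, ← add_assoc, Gamma_add_one (by positivity), ih, pochR_succ]
    ring

lemma choose_add_nat_sub_one_eq_pochR (a : ℝ) (n : ℕ) :
    Ring.choose (a + n - 1) n = pochR a n / n ! := by
  rw [Ring.choose_eq_smul, Polynomial.descPochhammer_smeval_eq_ascPochhammer,
    Polynomial.ascPochhammer_smeval_eq_eval, pochR_eq_ascPochhammer_eval, smul_eq_mul]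
  ring_nf

lemma hasSum_pochR_div_factorial_mul_pow (a : ℝ) {y : ℝ} (hy : |y| < 1) :
    HasSum (fun n => pochR a n / n ! * y ^ n) ((1 - y) ^ (-a)) := by
  have h := (one_div_one_sub_rpow_hasFPowerSeriesOnBall_zero a).hasSum
    (y := y) (by simpa [← ofReal_norm] using hy)
  simp only [FormalMultilinearSeries.ofScalars_apply_eq, choose_add_nat_sub_one_eq_pochR,
    smul_eq_mul, zero_add] at h
  rwa [rpow_neg (by linarith [abs_lt.1 hy]), ← one_div]

lemma ofReal_rpow_mul_one_sub_rpow {t : ℝ} (ht : t ∈ Icc 0 1) (u v : ℝ) :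
    ((t ^ (u - 1) * (1 - t) ^ (v - 1) : ℝ) : ℂ) =
      (t : ℂ) ^ ((u : ℂ) - 1) * (1 - (t : ℂ)) ^ ((v : ℂ) - 1) := by
  rw [Complex.ofReal_mul, Complex.ofReal_cpow ht.1, Complex.ofReal_cpow (by linarith [ht.2])]
  push_cast
  rfl

lemma betaIntegral_ofReal (u v : ℝ) :
    Complex.betaIntegral u v = ∫ t in Ioo (0 : ℝ) 1, t ^ (u - 1) * (1 - t) ^ (v - 1) := by
  rw [Complex.betaIntegral, intervalIntegral.integral_of_le zero_le_one,
    integral_Ioc_eq_integral_Ioo, ← integral_complex_ofReal]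
  exact setIntegral_congr_fun measurableSet_Ioo fun t ht =>
    (ofReal_rpow_mul_one_sub_rpow (Ioo_subset_Icc_self ht) u v).symm

lemma integral_rpow_mul_one_sub_rpow {u v : ℝ} (hu : 0 < u) (hv : 0 < v) :
    ∫ t in Ioo (0 : ℝ) 1, t ^ (u - 1) * (1 - t) ^ (v - 1) = beta u v := by
  rw [beta_eq_betaIntegralReal u v hu hv, betaIntegral_ofReal, Complex.ofReal_re]

lemma integrableOn_rpow_mul_one_sub_rpow {u v : ℝ} (hu : 0 < u) (hv : 0 < v) :
    IntegrableOn (fun t : ℝ => t ^ (u - 1) * (1 - t) ^ (v - 1)) (Ioo 0 1) := by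
  have h := Complex.betaIntegral_convergent (u := u) (v := v) (by simpa) (by simpa)
  rw [intervalIntegrable_iff_integrableOn_Ioo_of_le zero_le_one] at h
  refine IntegrableOn.congr_fun (μ := volume) h.re (fun t ht => ?_) measurableSet_Ioo
  rw [← ofReal_rpow_mul_one_sub_rpow (Ioo_subset_Icc_self ht)]
  exact Complex.ofReal_re _

lemma beta_add_nat {b d : ℝ} (hb : 0 < b) (hd : 0 < d) (n : ℕ) :
    beta (b + n) d = pochR b n / pochR (b + d) n * beta b d := by
  have hGamma : Gamma (b + d) ≠ 0 := (Gamma_pos_of_pos (by positivity)).ne'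
  have hpoch : pochR (b + d) n ≠ 0 := (pochR_pos (by positivity) n).ne'
  rw [beta, beta, add_right_comm, Gamma_add_nat hb, Gamma_add_nat (by positivity)]
  field_simp

lemma summable_hypR {a b c x : ℝ} (ha : 0 ≤ a) (hb : 0 < b) (hbc : b ≤ c) (hx : 0 ≤ x)
    (hx1 : x < 1) : Summable fun n => pochR a n * pochR b n / pochR c n * x ^ n / n ! := by
  have hc : 0 < c := hb.trans_le hbc
  refine Summable.of_nonneg_of_le (fun n => ?_) (fun n => ?_)
    (hasSum_pochR_div_factorial_mul_pow a (abs_lt.2 ⟨by linarith, hx1⟩)).summable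
  · have := pochR_nonneg ha n; have := pochR_pos hb n; have := pochR_pos hc n
    positivity
  · have hbc_le : pochR b n / pochR c n ≤ 1 :=
      div_le_one_of_le₀ (pochR_le_pochR hb.le hbc n) (pochR_pos hc n).le
    have := pochR_nonneg ha n
    calc pochR a n * pochR b n / pochR c n * x ^ n / n !
        = pochR b n / pochR c n * (pochR a n / n ! * x ^ n) := by ring
      _ ≤ 1 * (pochR a n / n ! * x ^ n) := by gcongr
      _ = pochR a n / n ! * x ^ n := one_mul _

lemma tsum_pochR_mul_rpow_mul_one_sub_rpow (a b d : ℝ) {x t : ℝ} (ht : 0 < t)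
    (hxt : |x * t| < 1) :
    ∑' n : ℕ, pochR a n / n ! * x ^ n * (t ^ (b + n - 1) * (1 - t) ^ (d - 1)) =
      t ^ (b - 1) * (1 - t) ^ (d - 1) * (1 - x * t) ^ (-a) := by
  rw [← (hasSum_pochR_div_factorial_mul_pow a hxt).tsum_eq, ← tsum_mul_left]
  refine tsum_congr fun n => ?_
  rw [add_sub_right_comm, rpow_add ht, rpow_natCast, mul_pow]
  ring

theorem hypR_eq_integral {a b c x : ℝ} (ha : 0 ≤ a) (hb : 0 < b) (hbc : b < c) (hx : 0 ≤ x)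
    (hx1 : x < 1) :
    hypR a b c x = (beta b (c - b))⁻¹ *
      ∫ t in Ioo (0 : ℝ) 1, t ^ (b - 1) * (1 - t) ^ (c - b - 1) * (1 - x * t) ^ (-a) := by
  set F : ℕ → ℝ → ℝ := fun n t =>
    pochR a n / n ! * x ^ n * (t ^ (b + n - 1) * (1 - t) ^ (c - b - 1))
  have hcb : 0 < c - b := sub_pos.2 hbc
  have hF_int : ∀ n, IntegrableOn (F n) (Ioo 0 1) := fun n =>
    (integrableOn_rpow_mul_one_sub_rpow (by positivity) hcb).const_mul _
  have hF_nonneg : ∀ n, ∀ t ∈ Ioo (0 : ℝ) 1, 0 ≤ F n t := fun n t ht => by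
    have := pochR_nonneg ha n
    have := ht.1; have := sub_pos.2 ht.2
    positivity
  have hF_integral : ∀ n, ∫ t in Ioo (0 : ℝ) 1, F n t =
      beta b (c - b) * (pochR a n * pochR b n / pochR c n * x ^ n / n !) := fun n => by
    rw [integral_const_mul, integral_rpow_mul_one_sub_rpow (by positivity) hcb,
      beta_add_nat hb hcb, add_sub_cancel]
    ring
  have hF_tsum : ∀ t ∈ Ioo (0 : ℝ) 1, ∑' n, F n t =
      t ^ (b - 1) * (1 - t) ^ (c - b - 1) * (1 - x * t) ^ (-a) := fun t ht =>
    tsum_pochR_mul_rpow_mul_one_sub_rpow a b (c - b) ht.1 <| by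
      rw [abs_of_nonneg (by nlinarith [ht.1])]; nlinarith [ht.1, ht.2]
  have hsummable := (summable_hypR ha hb hbc.le hx hx1).mul_left (beta b (c - b))
  have key := integral_tsum_of_summable_integral_norm hF_int <| hsummable.congr fun n => by
    rw [← hF_integral]
    exact setIntegral_congr_fun measurableSet_Ioo fun t ht =>
      (norm_of_nonneg (hF_nonneg n t ht)).symm
  rw [setIntegral_congr_fun measurableSet_Ioo hF_tsum] at key
  rw [← key, hypR]
  simp_rw [hF_integral]
  rw [tsum_mul_left, inv_mul_cancel_left₀ (beta_pos hb hcb).ne']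

lemma setIntegral_Ioo_zero_one_comp_one_sub (f : ℝ → ℝ) :
    ∫ t in Ioo (0 : ℝ) 1, f (1 - t) = ∫ t in Ioo (0 : ℝ) 1, f t := by
  simpa [intervalIntegral.integral_of_le zero_le_one, integral_Ioc_eq_integral_Ioo] using
    intervalIntegral.integral_comp_sub_left f (a := 0) (b := 1) 1

lemma setIntegral_Ioo_zero_one_comp_rpow {p : ℝ} (hp : 0 < p) (g : ℝ → ℝ) :
    ∫ x in Ioo (0 : ℝ) 1, p * x ^ (p - 1) * g (x ^ p) = ∫ y in Ioo (0 : ℝ) 1, g y := by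
  have hIoo : Ioo (0 : ℝ) 1 = Ioi 0 ∩ Iio 1 := Ioi_inter_Iio.symm
  rw [hIoo, ← setIntegral_indicator measurableSet_Iio, ← setIntegral_indicator measurableSet_Iio,
    ← integral_comp_rpow_Ioi_of_pos (g := (Iio 1).indicator g) hp]
  refine setIntegral_congr_fun measurableSet_Ioi fun x (hx : 0 < x) => ?_
  have hlt : x ^ p < 1 ↔ x < 1 := rpow_lt_one_iff_of_pos hx |>.trans (by grind)
  by_cases h : x < 1
  · simp [indicator_of_mem, h, hlt.2 h]
  · simp [indicator_of_notMem, h, mt hlt.1 h]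

lemma integral_euler_kernel_eq_beta_quarter_half :
    ∫ t in Ioo (0 : ℝ) 1,
        t ^ (-(1 / 2) : ℝ) * (1 - t) ^ (-(1 / 2) : ℝ) * (1 - 1 / 2 * t) ^ (-(1 / 2) : ℝ) =
      beta (1 / 4) (1 / 2) / √2 := by
  set g : ℝ → ℝ := fun s =>
    (1 - s) ^ (-(1 / 2) : ℝ) * s ^ (-(1 / 2) : ℝ) * (1 - 1 / 2 * (1 - s)) ^ (-(1 / 2) : ℝ)
  calc _ = ∫ s in Ioo (0 : ℝ) 1, g s := by
        rw [← setIntegral_Ioo_zero_one_comp_one_sub g]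
        simp only [g, sub_sub_cancel]
    _ = ∫ w in Ioo (0 : ℝ) 1, 1 / 2 * w ^ ((1 : ℝ) / 2 - 1) * g (w ^ ((1 : ℝ) / 2)) :=
        (setIntegral_Ioo_zero_one_comp_rpow (by norm_num) g).symm
    _ = ∫ w in Ioo (0 : ℝ) 1, (√2)⁻¹ * (w ^ ((1 : ℝ) / 4 - 1) * (1 - w) ^ ((1 : ℝ) / 2 - 1)) := by
        refine setIntegral_congr_fun measurableSet_Ioo fun w ⟨hw0, hw1⟩ => ?_
        have hs1 : √w < 1 := by simpa using sqrt_lt_sqrt hw0.le hw1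
        have hprod : (1 - √w) * (1 - 1 / 2 * (1 - √w)) = (1 - w) / 2 := by
          have := sq_sqrt hw0.le; nlinarith
        have hw_exp : w ^ (-(1 / 2) : ℝ) * √w ^ (-(1 / 2) : ℝ) = w ^ (-(3 / 4) : ℝ) := by
          rw [sqrt_eq_rpow, ← rpow_mul hw0.le, ← rpow_add hw0]; norm_num
        have h2 : (1 / 2 : ℝ) / 2 ^ (-(1 / 2) : ℝ) = (√2)⁻¹ := by
          rw [rpow_neg zero_le_two, ← sqrt_eq_rpow, div_inv_eq_mul]
          field_simp
          norm_num
        simp only [g, ← sqrt_eq_rpow]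
        rw [show (1 : ℝ) / 2 - 1 = -(1 / 2) by norm_num,
          show (1 : ℝ) / 4 - 1 = -(3 / 4) by norm_num]
        calc _ = 1 / 2 * ((1 - √w) * (1 - 1 / 2 * (1 - √w))) ^ (-(1 / 2) : ℝ) *
              (w ^ (-(1 / 2) : ℝ) * √w ^ (-(1 / 2) : ℝ)) := by
              rw [mul_rpow (by linarith) (by nlinarith)]; ring
          _ = _ := by
              rw [hprod, hw_exp, div_rpow (by linarith) zero_le_two, ← h2]; ring
    _ = _ := by
        rw [integral_const_mul, integral_rpow_mul_one_sub_rpow (by norm_num) (by norm_num)]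
        ring

lemma beta_half_half : beta (1 / 2) (1 / 2) = π := by
  rw [beta, Gamma_one_half_eq, add_halves, Gamma_one, div_one, mul_self_sqrt pi_pos.le]

lemma Gamma_one_quarter_mul_Gamma_three_quarters : Gamma (1 / 4) * Gamma (3 / 4) = √2 * π := by
  have h := Gamma_mul_Gamma_one_sub (1 / 4)
  rw [show (1 : ℝ) - 1 / 4 = 3 / 4 by norm_num, show π * (1 / 4) = π / 4 by ring,
    sin_pi_div_four] at h
  rw [h]
  field_simp
  exact (sq_sqrt zero_le_two).symm

theorem hypR_half_half_one_half :
    hypR (1/2) (1/2) 1 (1/2) =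
      Real.Gamma (1/4) ^ 2 / (2 * Real.pi ^ ((3:ℝ)/2)) := by
  have hEuler := hypR_eq_integral (a := 1 / 2) (b := 1 / 2) (c := 1) (x := 1 / 2)
    (by norm_num) (by norm_num) (by norm_num) (by norm_num) (by norm_num)
  norm_num at hEuler
  have hpow : π ^ ((3 : ℝ) / 2) = π * √π := by
    rw [show (3 : ℝ) / 2 = 1 + 1 / 2 by norm_num, rpow_add pi_pos, rpow_one, ← sqrt_eq_rpow]
  rw [hEuler, beta_half_half, integral_euler_kernel_eq_beta_quarter_half, beta,
    Gamma_one_half_eq, hpow, show (1 / 4 + 1 / 2 : ℝ) = 3 / 4 by norm_num]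
  field_simp
  rw [Gamma_one_quarter_mul_Gamma_three_quarters, sq_sqrt pi_pos.le]
  linear_combination -π * mul_self_sqrt (zero_le_two : (0 : ℝ) ≤ 2)
end

section
/- Let y > 0 and set x so that y and x are related by y = π K'(x)/K(x) with z = ₂F₁(1/2,1/2;1;x) and z' = dz/dx. Treating y as a function of x, one has dy/dx = -1/(x(1-x)z^2), and consequently ∑_{n≥1} n^{2p} cosh(ny)/sinh(ny)^2 = x(1-x) z^2 · d/dx [ ∑_{n≥1} n^{2p-1}/sinh(ny) ] for every positive integer p. -/
open scoped BigOperators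

/-- `z(x) = ₂F₁(1/2,1/2;1;x)`. -/
noncomputable def zfun (x : ℝ) : ℝ :=
  ∑' k : ℕ, pochR (1/2) k ^ 2 / (k.factorial : ℝ) ^ 2 * x ^ k

/-- Complete elliptic integral of the first kind `K(x) = (π/2)·₂F₁(1/2,1/2;1;x)`. -/
noncomputable def Kfun (x : ℝ) : ℝ := Real.pi / 2 * zfun x

/-- `y(x) = π K'(x)/K(x)` where `K'(x) = K(1-x)`. -/
noncomputable def yfun (x : ℝ) : ℝ := Real.pi * Kfun (1 - x) / Kfun x

/-!
The Taylor coefficients `zcoeff k = ((1/2)_k / k!)^2` of `z` satisfy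
`(k + 1)^2 zcoeff (k + 1) = (k + 1/2)^2 zcoeff k`, which is the hypergeometric equation
`(x (1 - x) z')' = z / 4`. Hence `x (1 - x)` times the Wronskian of `z(x)` and `z(1 - x)` is
constant on `(0, 1)`. By Wallis' product `k · zcoeff k → 1/π`, so by an Abelian theorem
`(1 - s) z(s) → 0` and `s (1 - s) z'(s) → 1/π` as `s → 1⁻`; letting `x → 0⁺` shows that the
constant is `1/π`, and differentiating `y = π z(1 - x) / z(x)` gives `y' = -1/(x (1 - x) z²)`.
The second claim is then the chain rule: for `y > 0` the sinh series may be differentiated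
termwise, its terms and their derivatives being dominated by `(n + 1)^(m + 1) e^(-n y / 2)`.
-/

open Filter Topology Real

section PowerSeries

lemma summable_succ_pow_mul_geometric (m : ℕ) {r : ℝ} (hr : |r| < 1) :
    Summable fun k : ℕ => ((k : ℝ) + 1) ^ m * r ^ k := by
  have hdesc := summable_descFactorial_mul_geometric_of_norm_lt_one m
    (show ‖|r|‖ < 1 by rwa [norm_eq_abs, abs_abs])
  refine .of_norm_bounded hdesc fun k => ?_
  have hpow : (k + 1) ^ m ≤ (k + m).descFactorial m := by
    rw [Nat.add_descFactorial_eq_ascFactorial]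
    exact Nat.pow_succ_le_ascFactorial (k + 1) m
  rw [norm_mul, norm_pow, norm_pow, norm_eq_abs, norm_eq_abs, abs_of_nonneg (by positivity)]
  gcongr
  exact_mod_cast hpow

variable {b : ℕ → ℝ} {C : ℝ} {m : ℕ}

lemma summable_mul_pow_of_abs_le (hb : ∀ k, |b k| ≤ C * ((k : ℝ) + 1) ^ m) {x : ℝ}
    (hx : |x| < 1) : Summable fun k => b k * x ^ k := by
  have hx' : |(|x|)| < 1 := by rwa [abs_abs]
  refine .of_norm_bounded ((summable_succ_pow_mul_geometric m hx').mul_left C) fun k => ?_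
  rw [norm_mul, norm_pow, norm_eq_abs, norm_eq_abs, ← mul_assoc]
  exact mul_le_mul_of_nonneg_right (hb k) (by positivity)

lemma tsum_mul_pow_eq_zero_add {c : ℕ → ℝ} {x : ℝ} (h : Summable fun k => c k * x ^ k) :
    ∑' k, c k * x ^ k = c 0 + x * ∑' k, c (k + 1) * x ^ k := by
  rw [h.tsum_eq_zero_add, ← tsum_mul_left]
  simp only [pow_zero, mul_one, pow_succ]
  congr 1
  exact tsum_congr fun k => by ring

lemma hasDerivAt_tsum_mul_pow (hb : ∀ k, |b k| ≤ C * ((k : ℝ) + 1) ^ m) {x : ℝ}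
    (hx : |x| < 1) :
    HasDerivAt (fun y => ∑' k, b k * y ^ k) (∑' k : ℕ, ((k : ℝ) + 1) * b (k + 1) * x ^ k) x := by
  obtain ⟨r, hxr, hr1⟩ := exists_between hx
  have hr0 : 0 < r := (abs_nonneg x).trans_lt hxr
  have hbound : ∀ k, ∀ y ∈ Set.Ioo (-r) r,
      ‖b k * (k * y ^ (k - 1))‖ ≤ C / r * ((k : ℝ) + 1) ^ (m + 1) * r ^ k := by
    intro k y hy
    have hyr : |y| ≤ r := (abs_lt.mpr hy).le
    rcases k with _ | k
    · have hC : 0 ≤ C := by simpa using (abs_nonneg _).trans (hb 0)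
      simp only [CharP.cast_eq_zero, zero_mul, mul_zero, norm_zero]
      exact mul_nonneg (mul_nonneg (div_nonneg hC hr0.le) (by positivity)) (by positivity)
    · have hk : (0 : ℝ) ≤ (k : ℝ) + 1 := by positivity
      rw [norm_mul, norm_mul, norm_pow, norm_eq_abs, norm_eq_abs, norm_eq_abs,
        Nat.add_sub_cancel, Nat.cast_succ, abs_of_nonneg hk, pow_succ r]
      calc |b (k + 1)| * (((k : ℝ) + 1) * |y| ^ k)
          ≤ C * ((k : ℝ) + 1 + 1) ^ m * (((k : ℝ) + 1 + 1) * r ^ k) := by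
            have := hb (k + 1)
            push_cast at this
            gcongr
            · exact (abs_nonneg _).trans this
            · linarith
        _ = C / r * ((k : ℝ) + 1 + 1) ^ (m + 1) * (r ^ k * r) := by
            field_simp
            ring
  have hu : Summable fun k : ℕ => C / r * ((k : ℝ) + 1) ^ (m + 1) * r ^ k :=
    summable_mul_pow_of_abs_le (C := |C / r|) (fun k => by
      rw [abs_mul, abs_of_nonneg (by positivity : (0 : ℝ) ≤ ((k : ℝ) + 1) ^ (m + 1))])
      (by rwa [abs_of_pos hr0])
  have hxmem : x ∈ Set.Ioo (-r) r := abs_lt.mp hxr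
  refine (hasDerivAt_tsum_of_isPreconnected hu isOpen_Ioo isPreconnected_Ioo
    (fun k y _ => (hasDerivAt_pow k y).const_mul (b k)) hbound hxmem
    (summable_mul_pow_of_abs_le hb hx) hxmem).congr_deriv ?_
  rw [(Summable.of_norm_bounded hu fun k => hbound k x hxmem).tsum_eq_zero_add]
  simp only [CharP.cast_eq_zero, zero_mul, mul_zero, zero_add, Nat.add_sub_cancel, Nat.cast_succ]
  exact tsum_congr fun k => by ring

lemma tendsto_one_sub_mul_tsum_mul_pow {c : ℕ → ℝ} {L : ℝ} (hc : Tendsto c atTop (𝓝 L)) :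
    Tendsto (fun x => (1 - x) * ∑' k, c k * x ^ k) (𝓝[<] 1) (𝓝 L) := by
  obtain ⟨B, hB⟩ := isBounded_iff_forall_norm_le.mp (Metric.isBounded_range_of_tendsto c hc)
  have hcB : ∀ k, |c k| ≤ B * ((k : ℝ) + 1) ^ 0 := fun k => by
    simpa using hB _ (Set.mem_range_self k)
  have hcB' : ∀ k, |c (k + 1)| ≤ B * ((k : ℝ) + 1) ^ 0 := fun k => by
    simpa using hB _ (Set.mem_range_self (k + 1))
  have habel : Tendsto (fun x => ∑' k, (c (k + 1) - c k) * x ^ k) (𝓝[<] 1) (𝓝 (L - c 0)) :=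
    Real.tendsto_tsum_powerSeries_nhdsWithin_lt <| by
      simp_rw [Finset.sum_range_sub]
      exact hc.sub_const _
  have hlim := ((tendsto_nhdsWithin_of_tendsto_nhds tendsto_id).mul habel).const_add (c 0)
  rw [one_mul, add_sub_cancel] at hlim
  refine hlim.congr' ?_
  filter_upwards [Ioo_mem_nhdsLT (show (-1 : ℝ) < 1 by norm_num)] with x hx
  have hx' : |x| < 1 := abs_lt.mpr hx
  have hs := summable_mul_pow_of_abs_le hcB hx'
  have hdiff : ∑' k, (c (k + 1) - c k) * x ^ k
      = ∑' k, c (k + 1) * x ^ k - ∑' k, c k * x ^ k := by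
    simp_rw [sub_mul]
    exact (summable_mul_pow_of_abs_le hcB' hx').tsum_sub hs
  rw [id, hdiff]
  linear_combination -tsum_mul_pow_eq_zero_add hs

end PowerSeries

section Coefficients

noncomputable def zcoeff (k : ℕ) : ℝ := pochR (1 / 2) k ^ 2 / (k.factorial : ℝ) ^ 2

lemma zfun_eq_tsum (x : ℝ) : zfun x = ∑' k, zcoeff k * x ^ k := rfl

lemma zcoeff_zero : zcoeff 0 = 1 := by simp [zcoeff, pochR]

lemma zcoeff_succ (k : ℕ) : zcoeff (k + 1) = ((2 * k + 1) / (2 * k + 2)) ^ 2 * zcoeff k := by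
  simp only [zcoeff, pochR, Finset.prod_range_succ, Nat.factorial_succ]
  push_cast
  field_simp
  ring

lemma succ_sq_mul_zcoeff_succ (k : ℕ) :
    ((k : ℝ) + 1) ^ 2 * zcoeff (k + 1) = ((k : ℝ) + 1 / 2) ^ 2 * zcoeff k := by
  rw [zcoeff_succ]
  field_simp

lemma zcoeff_nonneg (k : ℕ) : 0 ≤ zcoeff k := by unfold zcoeff; positivity

lemma zcoeff_le_one (k : ℕ) : zcoeff k ≤ 1 := by
  induction k with
  | zero => rw [zcoeff_zero]
  | succ k ih =>
    have hratio : ((2 * (k : ℝ) + 1) / (2 * k + 2)) ^ 2 ≤ 1 :=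
      pow_le_one₀ (by positivity) ((div_le_one (by positivity)).mpr (by linarith))
    rw [zcoeff_succ]
    exact mul_le_one₀ hratio (zcoeff_nonneg k) ih

lemma abs_mul_zcoeff_le {c : ℝ} {j n : ℕ} (hc0 : 0 ≤ c) (hc : c ≤ ((n : ℝ) + 1) ^ j)
    (k : ℕ) : |c * zcoeff k| ≤ 1 * ((n : ℝ) + 1) ^ j := by
  rw [abs_of_nonneg (mul_nonneg hc0 (zcoeff_nonneg k)), one_mul]
  exact (mul_le_of_le_one_right hc0 (zcoeff_le_one k)).trans hc

lemma abs_zcoeff_le (k : ℕ) : |zcoeff k| ≤ 1 * ((k : ℝ) + 1) ^ 0 := by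
  simpa using abs_mul_zcoeff_le (c := 1) (j := 0) (n := k) zero_le_one (by simp) k

lemma wallis_mul_zcoeff (k : ℕ) : Real.Wallis.W k * ((2 * k + 1) * zcoeff k) = 1 := by
  induction k with
  | zero => simp [Real.Wallis.W, zcoeff_zero]
  | succ k ih =>
    calc Real.Wallis.W (k + 1) * ((2 * ((k + 1 : ℕ) : ℝ) + 1) * zcoeff (k + 1))
        = Real.Wallis.W k * ((2 * k + 1) * zcoeff k) := by
          rw [Real.Wallis.W_succ, zcoeff_succ]
          push_cast
          field_simp
          ring
      _ = 1 := ih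

lemma tendsto_two_mul_add_one_mul_zcoeff :
    Tendsto (fun k : ℕ => (2 * k + 1) * zcoeff k) atTop (𝓝 (2 / π)) := by
  have h := Real.Wallis.tendsto_W_nhds_pi_div_two.inv₀ (by positivity)
  rw [inv_div] at h
  exact h.congr fun k => inv_eq_of_mul_eq_one_right (wallis_mul_zcoeff k)

lemma tendsto_zcoeff : Tendsto zcoeff atTop (𝓝 0) := by
  have hden : Tendsto (fun k : ℕ => 2 * (k : ℝ) + 1) atTop atTop :=
    tendsto_atTop_add_const_right _ _
      (tendsto_natCast_atTop_atTop.const_mul_atTop two_pos)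
  refine (tendsto_two_mul_add_one_mul_zcoeff.div_atTop hden).congr fun k => ?_
  field_simp

lemma tendsto_natCast_mul_zcoeff :
    Tendsto (fun k : ℕ => (k : ℝ) * zcoeff k) atTop (𝓝 (1 / π)) := by
  convert (tendsto_two_mul_add_one_mul_zcoeff.sub tendsto_zcoeff).div_const 2 using 1
  · ext k
    ring
  · rw [sub_zero]
    field_simp

end Coefficients

section HypergeometricEquation

variable {x : ℝ}

lemma summable_zcoeff_mul_pow (hx : |x| < 1) : Summable fun k => zcoeff k * x ^ k :=
  summable_mul_pow_of_abs_le abs_zcoeff_le hx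

noncomputable def zderiv (x : ℝ) : ℝ := ∑' k : ℕ, ((k : ℝ) + 1) * zcoeff (k + 1) * x ^ k

lemma hasDerivAt_zfun (hx : |x| < 1) : HasDerivAt zfun (zderiv x) x :=
  hasDerivAt_tsum_mul_pow abs_zcoeff_le hx

lemma continuousAt_zderiv (hx : |x| < 1) : ContinuousAt zderiv x :=
  (hasDerivAt_tsum_mul_pow (fun k => abs_mul_zcoeff_le (j := 1) (by positivity) (by simp) _)
    hx).continuousAt

lemma zfun_eq_one_add (hx : |x| < 1) : zfun x = 1 + x * ∑' k, zcoeff (k + 1) * x ^ k := by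
  rw [zfun_eq_tsum, tsum_mul_pow_eq_zero_add (summable_zcoeff_mul_pow hx), zcoeff_zero]

lemma zfun_zero : zfun 0 = 1 := by
  simpa using zfun_eq_one_add (x := 0) (by norm_num)

lemma one_le_zfun (h0 : 0 ≤ x) (h1 : x < 1) : 1 ≤ zfun x := by
  rw [zfun_eq_one_add (abs_lt.mpr ⟨by linarith, h1⟩), le_add_iff_nonneg_right]
  exact mul_nonneg h0 (tsum_nonneg fun k => mul_nonneg (zcoeff_nonneg _) (pow_nonneg h0 k))

lemma zfun_pos (h0 : 0 ≤ x) (h1 : x < 1) : 0 < zfun x :=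
  one_pos.trans_le (one_le_zfun h0 h1)

lemma summable_natCast_mul_zcoeff_mul_pow (hx : |x| < 1) :
    Summable fun k : ℕ => (k : ℝ) * zcoeff k * x ^ k :=
  summable_mul_pow_of_abs_le (fun k => abs_mul_zcoeff_le (j := 1) (by positivity) (by simp) k) hx

lemma mul_zderiv (hx : |x| < 1) : x * zderiv x = ∑' k : ℕ, (k : ℝ) * zcoeff k * x ^ k := by
  rw [tsum_mul_pow_eq_zero_add (summable_natCast_mul_zcoeff_mul_pow hx)]
  simp [zderiv]

lemma hasDerivAt_tsum_natCast_mul_zcoeff (hx : |x| < 1) :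
    HasDerivAt (fun t => ∑' k : ℕ, (k : ℝ) * zcoeff k * t ^ k)
      (∑' k : ℕ, ((k : ℝ) + 1) ^ 2 * zcoeff (k + 1) * x ^ k) x :=
  (hasDerivAt_tsum_mul_pow (fun k => abs_mul_zcoeff_le (j := 1) (by positivity) (by simp) k)
    hx).congr_deriv (tsum_congr fun k => by push_cast; ring)

lemma tsum_zcoeff_recurrence (hx : |x| < 1) :
    (1 - x) * ∑' k : ℕ, ((k : ℝ) + 1) ^ 2 * zcoeff (k + 1) * x ^ k
      - ∑' k : ℕ, (k : ℝ) * zcoeff k * x ^ k = zfun x / 4 := by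
  have hsucc : Summable fun k : ℕ => ((k : ℝ) + 1) ^ 2 * zcoeff (k + 1) * x ^ k :=
    summable_mul_pow_of_abs_le (fun k => abs_mul_zcoeff_le (by positivity) le_rfl (k + 1)) hx
  have hsq : Summable fun k : ℕ => (k : ℝ) ^ 2 * zcoeff k * x ^ k :=
    summable_mul_pow_of_abs_le
      (fun k => abs_mul_zcoeff_le (j := 2) (by positivity) (by gcongr; linarith) k) hx
  have hsum := (((hsucc.hasSum.sub hsq.hasSum).sub
    (summable_natCast_mul_zcoeff_mul_pow hx).hasSum).sub
    ((summable_zcoeff_mul_pow hx).hasSum.div_const 4)).congr_fun (g := fun _ => 0) fun k => by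
      linear_combination -x ^ k * succ_sq_mul_zcoeff_succ k
  have hshift := tsum_mul_pow_eq_zero_add hsq
  push_cast at hshift
  rw [zero_pow two_ne_zero, zero_mul, zero_add] at hshift
  rw [← zfun_eq_tsum] at hsum
  linarith [hsum.unique hasSum_zero]

noncomputable def zflux (x : ℝ) : ℝ := x * (1 - x) * zderiv x

/-- The hypergeometric equation `x (1 - x) z'' + (1 - 2x) z' = z / 4`. -/
lemma hasDerivAt_zflux (hx : |x| < 1) : HasDerivAt zflux (zfun x / 4) x := by
  have hflux : zflux =ᶠ[𝓝 x] fun t => (1 - t) * ∑' k : ℕ, (k : ℝ) * zcoeff k * t ^ k := by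
    filter_upwards [isOpen_lt continuous_abs continuous_const |>.mem_nhds hx] with t ht
    rw [zflux, mul_comm t, mul_assoc, mul_zderiv ht]
  refine ((((hasDerivAt_id x).const_sub 1).mul (hasDerivAt_tsum_natCast_mul_zcoeff hx)
    ).congr_of_eventuallyEq hflux).congr_deriv ?_
  rw [← tsum_zcoeff_recurrence hx, id]
  ring

end HypergeometricEquation

section Wronskian

variable {x : ℝ}

/-- `-x (1 - x)` times the Wronskian of `z(x)` and `z(1 - x)`. -/
noncomputable def zWronskian (x : ℝ) : ℝ := zfun x * zflux (1 - x) + zfun (1 - x) * zflux x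

lemma abs_lt_one_of_mem_Ioo (hx : x ∈ Set.Ioo (0 : ℝ) 1) : |x| < 1 :=
  abs_lt.mpr ⟨by linarith [hx.1], hx.2⟩

lemma one_sub_mem_Ioo (hx : x ∈ Set.Ioo (0 : ℝ) 1) : 1 - x ∈ Set.Ioo (0 : ℝ) 1 :=
  ⟨by linarith [hx.2], by linarith [hx.1]⟩

lemma hasDerivAt_zWronskian (hx : x ∈ Set.Ioo (0 : ℝ) 1) : HasDerivAt zWronskian 0 x := by
  have h1 := abs_lt_one_of_mem_Ioo hx
  have h2 := abs_lt_one_of_mem_Ioo (one_sub_mem_Ioo hx)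
  refine (((hasDerivAt_zfun h1).mul ((hasDerivAt_zflux h2).comp_const_sub 1 x)).add
    (((hasDerivAt_zfun h2).comp_const_sub 1 x).mul (hasDerivAt_zflux h1))).congr_deriv ?_
  simp only [zflux]
  ring

lemma tendsto_one_sub_nhdsGT_zero : Tendsto (fun t : ℝ => 1 - t) (𝓝[>] 0) (𝓝[<] 1) := by
  refine tendsto_nhdsWithin_of_tendsto_nhds_of_eventually_within _ ?_ ?_
  · simpa using ((continuous_sub_left (1 : ℝ)).tendsto 0).mono_left nhdsWithin_le_nhds
  · filter_upwards [self_mem_nhdsWithin] with t (ht : 0 < t)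
    exact sub_lt_self 1 ht

lemma tendsto_zflux_nhdsLT_one : Tendsto zflux (𝓝[<] 1) (𝓝 (1 / π)) := by
  refine (tendsto_one_sub_mul_tsum_mul_pow tendsto_natCast_mul_zcoeff).congr' ?_
  filter_upwards [Ioo_mem_nhdsLT (show (-1 : ℝ) < 1 by norm_num)] with s hs
  rw [zflux, mul_comm s, mul_assoc, mul_zderiv (abs_lt.mpr hs)]

lemma tendsto_one_sub_mul_zfun_nhdsLT_one :
    Tendsto (fun s => (1 - s) * zfun s) (𝓝[<] 1) (𝓝 0) :=
  tendsto_one_sub_mul_tsum_mul_pow tendsto_zcoeff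

lemma tendsto_zWronskian_nhdsGT_zero : Tendsto zWronskian (𝓝[>] 0) (𝓝 (1 / π)) := by
  have h0 : |(0 : ℝ)| < 1 := by norm_num
  have hz : Tendsto zfun (𝓝[>] 0) (𝓝 1) := by
    simpa [zfun_zero] using (hasDerivAt_zfun h0).continuousAt.tendsto.mono_left nhdsWithin_le_nhds
  have hzd : Tendsto (fun t => (1 - t) * zderiv t) (𝓝[>] 0) (𝓝 ((1 - 0) * zderiv 0)) :=
    (((continuous_sub_left (1 : ℝ)).tendsto 0).mul
      (continuousAt_zderiv h0).tendsto).mono_left nhdsWithin_le_nhds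
  have hlim := (hz.mul (tendsto_zflux_nhdsLT_one.comp tendsto_one_sub_nhdsGT_zero)).add
    ((tendsto_one_sub_mul_zfun_nhdsLT_one.comp tendsto_one_sub_nhdsGT_zero).mul hzd)
  rw [one_mul, zero_mul, add_zero] at hlim
  refine hlim.congr fun t => ?_
  simp only [Function.comp_apply, zWronskian, zflux]
  ring

lemma zWronskian_eq (hx : x ∈ Set.Ioo (0 : ℝ) 1) : zWronskian x = 1 / π := by
  have hconst : ∀ t ∈ Set.Ioo (0 : ℝ) 1, zWronskian t = zWronskian x := fun t ht =>
    isOpen_Ioo.is_const_of_deriv_eq_zero isPreconnected_Ioo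
      (fun s hs => (hasDerivAt_zWronskian hs).differentiableAt.differentiableWithinAt)
      (fun s hs => (hasDerivAt_zWronskian hs).deriv) ht hx
  refine tendsto_nhds_unique (tendsto_const_nhds.congr' ?_) tendsto_zWronskian_nhdsGT_zero
  filter_upwards [Ioo_mem_nhdsGT (show (0 : ℝ) < 1 by norm_num)] with t ht
  exact (hconst t ht).symm

end Wronskian

section Yfun

variable {x : ℝ}

lemma yfun_eq (x : ℝ) : yfun x = π * zfun (1 - x) / zfun x := by
  rw [yfun, Kfun, Kfun, mul_left_comm, mul_div_mul_left _ _ (by positivity)]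

lemma yfun_pos (hx : x ∈ Set.Ioo (0 : ℝ) 1) : 0 < yfun x := by
  have := zfun_pos hx.1.le hx.2
  have := zfun_pos (one_sub_mem_Ioo hx).1.le (one_sub_mem_Ioo hx).2
  rw [yfun_eq]
  positivity

lemma hasDerivAt_yfun (hx : x ∈ Set.Ioo (0 : ℝ) 1) :
    HasDerivAt yfun (-(1 / (x * (1 - x) * zfun x ^ 2))) x := by
  have hz := zfun_pos hx.1.le hx.2
  have hW := zWronskian_eq hx
  have hd := (((hasDerivAt_zfun (abs_lt_one_of_mem_Ioo (one_sub_mem_Ioo hx))).comp_const_sub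
    1 x).const_mul π).div (hasDerivAt_zfun (abs_lt_one_of_mem_Ioo hx)) hz.ne'
  rw [show yfun = fun t => π * zfun (1 - t) / zfun t from funext yfun_eq]
  refine hd.congr_deriv ?_
  simp only [zWronskian, zflux] at hW
  have hx0 : x ≠ 0 := hx.1.ne'
  have hx1 : 1 - x ≠ 0 := (sub_pos.mpr hx.2).ne'
  rw [eq_div_iff pi_ne_zero] at hW
  field_simp
  linear_combination -hW

end Yfun

section SinhSeries

variable {a u : ℝ}

lemma sinh_mul_exp_sub_le (h : a ≤ u) : sinh a * exp (u - a) ≤ sinh u := by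
  have hexp : exp (-u) ≤ exp (u - 2 * a) := exp_le_exp.mpr (by linarith)
  have hsplit : sinh a * exp (u - a) = (exp u - exp (u - 2 * a)) / 2 := by
    rw [sinh_eq, div_mul_eq_mul_div, sub_mul, ← exp_add, ← exp_add]
    ring_nf
  rw [hsplit, sinh_eq]
  linarith

lemma sinh_pos_of_le (ha : 0 < a) (h : a ≤ u) : 0 < sinh u :=
  sinh_pos_iff.mpr (ha.trans_le h)

lemma inv_sinh_le (ha : 0 < a) (h : a ≤ u) : (sinh u)⁻¹ ≤ exp (-(u - a)) / sinh a := by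
  rw [exp_neg, div_eq_mul_inv, ← mul_inv]
  exact inv_anti₀ (by have := sinh_pos_iff.mpr ha; positivity)
    (by rw [mul_comm]; exact sinh_mul_exp_sub_le h)

lemma cosh_div_sinh_sq_le (ha : 0 < a) (h : a ≤ u) :
    cosh u / sinh u ^ 2 ≤ exp a * exp (-(u - a)) / sinh a ^ 2 := by
  have hsa := sinh_pos_iff.mpr ha
  have hcosh : cosh u ≤ exp u := by
    rw [cosh_eq]
    linarith [exp_le_exp.mpr (show -u ≤ u by linarith)]
  calc cosh u / sinh u ^ 2 ≤ exp u / (sinh a * exp (u - a)) ^ 2 := by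
        gcongr
        exact sinh_mul_exp_sub_le h
    _ = exp a * exp (-(u - a)) / sinh a ^ 2 := by
        rw [exp_neg, show exp u = exp a * exp (u - a) by rw [← exp_add]; ring_nf]
        field_simp

lemma exp_neg_succ_mul_sub_le {t : ℝ} (h : a ≤ t) (n : ℕ) :
    exp (-((n + 1) * t - a)) ≤ exp (-a) ^ n := by
  rw [← exp_nat_mul]
  exact exp_le_exp.mpr (by nlinarith [(n.cast_nonneg : (0 : ℝ) ≤ n)])

lemma hasDerivAt_tsum_pow_div_sinh (m : ℕ) {y : ℝ} (hy : 0 < y) :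
    HasDerivAt (fun t => ∑' n : ℕ, ((n : ℝ) + 1) ^ m / sinh ((n + 1) * t))
      (-∑' n : ℕ, ((n : ℝ) + 1) ^ (m + 1) * cosh ((n + 1) * y) / sinh ((n + 1) * y) ^ 2) y := by
  set a := y / 2
  have ha : 0 < a := half_pos hy
  have hya : y ∈ Set.Ioi a := half_lt_self hy
  have hq : |exp (-a)| < 1 := by rw [abs_of_pos (exp_pos _), exp_lt_one_iff, neg_lt_zero]; exact ha
  have hle : ∀ (n : ℕ) {t}, t ∈ Set.Ioi a → a ≤ (n + 1) * t := fun n t (ht : a < t) => by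
    nlinarith [(n.cast_nonneg : (0 : ℝ) ≤ n)]
  have hterm : ∀ (n : ℕ), ∀ t ∈ Set.Ioi a,
      HasDerivAt (fun t => ((n : ℝ) + 1) ^ m / sinh ((n + 1) * t))
        (-(((n : ℝ) + 1) ^ (m + 1) * cosh ((n + 1) * t) / sinh ((n + 1) * t) ^ 2)) t := by
    intro n t ht
    have hsinh := (hasDerivAt_sinh _).comp t ((hasDerivAt_id t).const_mul ((n : ℝ) + 1))
    refine ((hasDerivAt_const t (((n : ℝ) + 1) ^ m)).div hsinh
      (sinh_pos_of_le ha (hle n ht)).ne').congr_deriv ?_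
    simp only [Function.comp_apply, id, mul_one, pow_succ]
    ring
  have hbound : ∀ (n : ℕ), ∀ t ∈ Set.Ioi a,
      ‖-(((n : ℝ) + 1) ^ (m + 1) * cosh ((n + 1) * t) / sinh ((n + 1) * t) ^ 2)‖
        ≤ exp a / sinh a ^ 2 * (((n : ℝ) + 1) ^ (m + 1) * exp (-a) ^ n) := by
    intro n t ht
    rw [norm_neg, norm_eq_abs, abs_of_nonneg (by
      have := sinh_pos_of_le ha (hle n ht); positivity), mul_div_assoc]
    calc ((n : ℝ) + 1) ^ (m + 1) * (cosh ((n + 1) * t) / sinh ((n + 1) * t) ^ 2)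
        ≤ ((n : ℝ) + 1) ^ (m + 1) * (exp a * exp (-a) ^ n / sinh a ^ 2) := by
          refine mul_le_mul_of_nonneg_left ?_ (by positivity)
          refine (cosh_div_sinh_sq_le ha (hle n ht)).trans ?_
          gcongr
          exact exp_neg_succ_mul_sub_le (le_of_lt ht) n
      _ = _ := by ring
  have hsum : Summable fun n : ℕ => ((n : ℝ) + 1) ^ m / sinh ((n + 1) * y) := by
    refine .of_norm_bounded ((summable_succ_pow_mul_geometric m hq).mul_left (sinh a)⁻¹)
      fun n => ?_
    rw [norm_eq_abs, abs_of_nonneg (by have := sinh_pos_of_le ha (hle n hya); positivity),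
      div_eq_mul_inv]
    calc ((n : ℝ) + 1) ^ m * (sinh ((n + 1) * y))⁻¹
        ≤ ((n : ℝ) + 1) ^ m * (exp (-a) ^ n / sinh a) := by
          refine mul_le_mul_of_nonneg_left ?_ (by positivity)
          refine (inv_sinh_le ha (hle n hya)).trans ?_
          gcongr
          exact exp_neg_succ_mul_sub_le (le_of_lt hya) n
      _ = _ := by ring
  rw [← tsum_neg]
  exact hasDerivAt_tsum_of_isPreconnected ((summable_succ_pow_mul_geometric (m + 1) hq).mul_left _)
    isOpen_Ioi isPreconnected_Ioi hterm hbound hya hsum hya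

end SinhSeries

theorem deriv_yfun_and_sinh_series (x : ℝ) (hx : x ∈ Set.Ioo (0 : ℝ) 1) :
    deriv yfun x = -(1 / (x * (1 - x) * zfun x ^ 2)) ∧
      ∀ p : ℕ, 1 ≤ p →
        ∑' n : ℕ,
            (n + 1 : ℝ) ^ (2 * p) * Real.cosh ((n + 1) * yfun x) /
              Real.sinh ((n + 1) * yfun x) ^ 2 =
          x * (1 - x) * zfun x ^ 2 *
            deriv (fun t : ℝ =>
              ∑' n : ℕ, (n + 1 : ℝ) ^ (2 * p - 1) / Real.sinh ((n + 1) * yfun t)) x := by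
  have hy := hasDerivAt_yfun hx
  refine ⟨hy.deriv, fun p hp => ?_⟩
  have hseries := (hasDerivAt_tsum_pow_div_sinh (2 * p - 1) (yfun_pos hx)).comp x hy
  rw [Nat.sub_add_cancel (by omega), Function.comp_def] at hseries
  have hD : x * (1 - x) * zfun x ^ 2 ≠ 0 := by
    have := zfun_pos hx.1.le hx.2
    have := sub_pos.mpr hx.2
    have := hx.1
    positivity
  rw [hseries.deriv, neg_mul_neg, mul_one_div, mul_div_cancel₀ _ hD]
end
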